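/- arXiv:2111.00309 — 3 statements merged into one kernel-verified Lean document; each statement's English description precedes it below -/
import Mathlib

section
/- (Pruning Strategy 1 / downward closure of TWU) Let D be a finite quantitative transaction database over a finite item set I with external utility eu : I → ℕ, and let σ ∈ ℕ be a minimum utility threshold. If an itemset X satisfies TWU(X) < σ, then X and every superset Y ⊇ X is a low-utility itemset: u(Y) < σ for all Y with X ⊆ Y. -/
/-- The set of items occurring in a transaction `T` (those with positive quantity). -/
def supp {I : Type*} [Fintype I] [DecidableEq I] (T : I → ℕ) : Finset I :=
  Finset.univ.filter fun i => 0 < T i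

/-- The utility of an itemset `X` in a transaction `T`: `u(X,T) = Σ_{i∈X} eu(i)·T(i)`. -/
def utilIn {I : Type*} (eu : I → ℕ) (X : Finset I) (T : I → ℕ) : ℕ :=
  ∑ i ∈ X, eu i * T i

/-- The transaction utility `tu(T) = Σ_{i∈supp(T)} eu(i)·T(i)`. -/
def tu {I : Type*} [Fintype I] [DecidableEq I] (eu : I → ℕ) (T : I → ℕ) : ℕ :=
  ∑ i ∈ supp T, eu i * T i

/-- The utility of an itemset `X` in the database:
`u(X) = Σ_{T∈D, X⊆supp(T)} u(X,T)`. -/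
def dbUtil {I ι : Type*} [Fintype I] [DecidableEq I] (eu : I → ℕ) (D : Finset ι)
    (Tq : ι → I → ℕ) (X : Finset I) : ℕ :=
  ∑ t ∈ D.filter (fun t => X ⊆ supp (Tq t)), utilIn eu X (Tq t)

/-- The transaction-weighted utilization `TWU(X) = Σ_{T∈D, X⊆supp(T)} tu(T)`. -/
def TWU {I ι : Type*} [Fintype I] [DecidableEq I] (eu : I → ℕ) (D : Finset ι)
    (Tq : ι → I → ℕ) (X : Finset I) : ℕ :=
  ∑ t ∈ D.filter (fun t => X ⊆ supp (Tq t)), tu eu (Tq t)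

/-- The remaining utility of `X` in `T` w.r.t. a linear order on items:
`ru(X,T) = Σ_{i∈supp(T), i > x for every x∈X} eu(i)·T(i)`. -/
def ru {I : Type*} [Fintype I] [LinearOrder I] (eu : I → ℕ) (X : Finset I)
    (T : I → ℕ) : ℕ :=
  ∑ i ∈ (supp T).filter (fun i => ∀ x ∈ X, x < i), eu i * T i

/-- Pruning Strategy 1, downward closure of TWU: if
`TWU(X) < σ`, then `X` and every superset `Y ⊇ X` is a low-utility itemset. -/
theorem pruning_strategy_one {I ι : Type*} [Fintype I] [DecidableEq I]
    (eu : I → ℕ) (D : Finset ι) (Tq : ι → I → ℕ) (σ : ℕ) (X : Finset I)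
    (h : TWU eu D Tq X < σ) :
    ∀ Y : Finset I, X ⊆ Y → dbUtil eu D Tq Y < σ := by
  intro Y hXY
  refine lt_of_le_of_lt ?_ h
  unfold dbUtil TWU
  calc ∑ t ∈ D.filter (fun t => Y ⊆ supp (Tq t)), utilIn eu Y (Tq t)
      ≤ ∑ t ∈ D.filter (fun t => Y ⊆ supp (Tq t)), tu eu (Tq t) := by
        refine Finset.sum_le_sum fun t ht => ?_
        simp only [Finset.mem_filter] at ht
        exact Finset.sum_le_sum_of_subset_of_nonneg ht.2 (fun _ _ _ => Nat.zero_le _)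
    _ ≤ ∑ t ∈ D.filter (fun t => X ⊆ supp (Tq t)), tu eu (Tq t) := by
        refine Finset.sum_le_sum_of_subset_of_nonneg ?_ (fun _ _ _ => Nat.zero_le _)
        intro t ht
        simp only [Finset.mem_filter] at *
        exact ⟨ht.1, hXY.trans ht.2⟩
end

section
/- Let D be a finite quantitative transaction database over a finite item set I equipped with a linear order <, with external utility eu : I → ℕ. Let X and Z be itemsets such that every item of Z is greater (in the order <) than every item of X, and let Y = X ∪ Z. For every transaction T with Y ⊆ supp(T), the utility of the extension is bounded by u(Y,T) ≤ u(X,T) + ru(X,T). -/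
/-- if `Y = X ∪ Z` is an extension of `X` (every item of `Z` is greater
than every item of `X`), then for every transaction `T` with `Y ⊆ supp(T)`,
`u(Y,T) ≤ u(X,T) + ru(X,T)`. -/
theorem utilIn_extension_le {I : Type*} [Fintype I] [LinearOrder I]
    (eu : I → ℕ) (X Z Y : Finset I)
    (hZ : ∀ z ∈ Z, ∀ x ∈ X, x < z) (hY : Y = X ∪ Z)
    (T : I → ℕ) (hT : Y ⊆ supp T) :
    utilIn eu Y T ≤ utilIn eu X T + ru eu X T := by
  subst hY
  have hdisj : Disjoint X Z := by
    rw [Finset.disjoint_left]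
    intro a haX haZ
    exact lt_irrefl a (hZ a haZ a haX)
  calc ∑ i ∈ X ∪ Z, eu i * T i = ∑ i ∈ X, eu i * T i + ∑ i ∈ Z, eu i * T i :=
        Finset.sum_union hdisj
    _ ≤ utilIn eu X T + ru eu X T := by
        refine Nat.add_le_add_left (Finset.sum_le_sum_of_subset ?_) _
        intro z hz
        simp only [Finset.mem_filter]
        exact ⟨hT (Finset.mem_union_right _ hz), fun x hx => hZ z hz x hx⟩
end

section
/- (Pruning Strategy 2 / remaining-utility pruning) Let D be a finite quantitative transaction database over a finite item set I equipped with a linear order <, with external utility eu : I → ℕ, and let σ ∈ ℕ. If an itemset X satisfies Σ_{T∈D, X⊆supp(T)} (u(X,T) + ru(X,T)) < σ, then every extension Y of X (i.e., every Y = X ∪ Z where each item of Z is greater than every item of X) is a low-utility itemset: u(Y) < σ. -/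
/-- Pruning Strategy 2, remaining-utility pruning: if
`Σ_{T∈D, X⊆supp(T)} (u(X,T) + ru(X,T)) < σ`, then every extension `Y = X ∪ Z` of `X`
is a low-utility itemset: `u(Y) < σ`. -/
theorem pruning_strategy_two {I ι : Type*} [Fintype I] [LinearOrder I]
    (eu : I → ℕ) (D : Finset ι) (Tq : ι → I → ℕ) (σ : ℕ) (X : Finset I)
    (h : ∑ t ∈ D.filter (fun t => X ⊆ supp (Tq t)),
          (utilIn eu X (Tq t) + ru eu X (Tq t)) < σ) :
    ∀ Z Y : Finset I, (∀ z ∈ Z, ∀ x ∈ X, x < z) → Y = X ∪ Z →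
      dbUtil eu D Tq Y < σ := by
  intro Z Y hZ hY
  refine lt_of_le_of_lt ?_ h
  unfold dbUtil
  have hsub : D.filter (fun t => Y ⊆ supp (Tq t)) ⊆
      D.filter (fun t => X ⊆ supp (Tq t)) := by
    intro t ht
    simp only [Finset.mem_filter] at ht ⊢
    exact ⟨ht.1, (Finset.union_subset_iff.mp (hY ▸ ht.2)).1⟩
  calc ∑ t ∈ D.filter (fun t => Y ⊆ supp (Tq t)), utilIn eu Y (Tq t)
      ≤ ∑ t ∈ D.filter (fun t => Y ⊆ supp (Tq t)),
          (utilIn eu X (Tq t) + ru eu X (Tq t)) := by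
        apply Finset.sum_le_sum
        intro t ht
        simp only [Finset.mem_filter] at ht
        have hYs : Y ⊆ supp (Tq t) := ht.2
        have hZs : Z ⊆ supp (Tq t) := fun z hz => hYs (hY ▸ Finset.mem_union_right X hz)
        -- utilIn Y ≤ utilIn X + utilIn Z (Y = X ∪ Z)
        have h1 : utilIn eu Y (Tq t) ≤ utilIn eu X (Tq t) + utilIn eu Z (Tq t) := by
          have hdisj : Disjoint X Z := by
            rw [Finset.disjoint_left]
            intro a haX haZ
            exact lt_irrefl a (hZ a haZ a haX)
          unfold utilIn
          rw [hY, Finset.sum_union hdisj]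
        refine h1.trans (Nat.add_le_add_left ?_ _)
        unfold utilIn ru
        apply Finset.sum_le_sum_of_subset
        intro z hz
        simp only [Finset.mem_filter]
        exact ⟨hZs hz, fun x hx => hZ z hz x hx⟩
    _ ≤ ∑ t ∈ D.filter (fun t => X ⊆ supp (Tq t)),
          (utilIn eu X (Tq t) + ru eu X (Tq t)) :=
        Finset.sum_le_sum_of_subset hsub
end
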